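/- arXiv:2505.03719 — 2 statements merged into one kernel-verified Lean document; each statement's English description precedes it below -/
import Mathlib

section
/- Let V ⊆ ℝ^m be a linear subspace and let F : ℝ^m → ℝ be convex, differentiable, and L-smooth, with F μ-strongly convex on V for some 0 < μ < L; suppose ∇F(v) ∈ V for every v ∈ V and F attains its global minimum at some y* ∈ V. Set κ = L/μ and β = (√κ − 1)/(√κ + 1). Let ε₁ ≥ 0, θ ∈ (0,1), and ε_k² = ε₁² θ^{k−1} for k ≥ 1. Define y⁰ = v⁰ = 0 and, for k ≥ 0: y^{k+1} = v^k − (1/L)(∇F(v^k) + e^{k+1}) where e^{k+1} ∈ V and ‖e^{k+1}‖ ≤ ε_{k+1}, and v^{k+1} = y^{k+1} + β(y^{k+1} − y^k). Then: (i) if θ ≠ 1 − 1/√κ, there exists M > 0 such that F(y^k) − F(y*) ≤ M · max(1 − 1/√κ, θ)^k for all k ≥ 1; (ii) if θ = 1 − 1/√κ, there exists M > 0 such that F(y^k) − F(y*) ≤ M · k² (1 − 1/√κ)^k for all k ≥ 1. -/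
/-!
Nesterov's potential `Φ_k = F(y^k) − F(y*) + μ/2 ‖(√κ + 1) v^k − √κ y^k − y*‖²` contracts by the
factor `1 − 1/√κ` at every step, up to an error `‖e^{k+1}‖ (‖y^{k+1} − y*‖ + ‖y^k − y*‖)`.
Strong convexity bounds these distances by `√(2Φ/μ)`, so `a_k = √Φ_k` obeys the perturbed
contraction `a_{k+1} ≤ √(1 − 1/√κ) a_k + K ε_{k+1}` with `ε_{k+1} = ε₁ √θ^k`. Unrolling it gives
`a_k = O(max(√(1 − 1/√κ), √θ)^k)`, or `a_k = O(k √(1 − 1/√κ)^k)` when the two rates coincide,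
and `F(y^k) − F(y*) ≤ Φ_k = a_k²`.
-/

open scoped RealInnerProductSpace Topology
open Filter Set Finset

lemma le_mul_add_of_sq_le {a a' c ε ρ : ℝ} (hρ : 0 < ρ) (hρ1 : ρ ≤ 1) (hc : 0 ≤ c)
    (hε : 0 ≤ ε) (ha : 0 ≤ a) (h : a' ^ 2 ≤ ρ ^ 2 * a ^ 2 + c * ε * (a' + a)) :
    a' ≤ ρ * a + c * (1 + 1 / ρ) / 2 * ε := by
  -- complete the square on both sides
  have hsq : (a' - c * ε / 2) ^ 2 ≤ (ρ * a + c * ε / (2 * ρ)) ^ 2 := by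
    have hρε : c * ε / 2 ≤ c * ε / (2 * ρ) :=
      div_le_div_of_nonneg_left (by positivity) (by positivity) (by linarith)
    have hexp : (ρ * a + c * ε / (2 * ρ)) ^ 2 =
        ρ ^ 2 * a ^ 2 + c * ε * a + (c * ε / (2 * ρ)) ^ 2 := by
      field_simp
      ring
    nlinarith [mul_self_le_mul_self (by positivity) hρε]
  have hsum : c * ε / 2 + c * ε / (2 * ρ) = c * (1 + 1 / ρ) / 2 * ε := by field_simp
  linarith [(abs_le_of_sq_le_sq' hsq (by positivity)).2]

lemma eq_mul_sqrt_pow_of_sq_eq {ε : ℕ → ℝ} {θ : ℝ} (hθ : 0 ≤ θ) (hε : ∀ k, 0 ≤ ε (k + 1))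
    (h : ∀ k, 1 ≤ k → ε k ^ 2 = ε 1 ^ 2 * θ ^ (k - 1)) (k : ℕ) : ε (k + 1) = ε 1 * √θ ^ k := by
  refine (sq_eq_sq₀ (hε k) (mul_nonneg (hε 0) (by positivity))).1 ?_
  rw [h (k + 1) k.succ_pos, Nat.add_sub_cancel, mul_pow, ← pow_mul, mul_comm k, pow_mul,
    Real.sq_sqrt hθ]

lemma le_pow_mul_add_geom_sum₂ {a : ℕ → ℝ} {ρ σ b : ℝ} (hρ : 0 ≤ ρ)
    (h : ∀ k, a (k + 1) ≤ ρ * a k + b * σ ^ k) (k : ℕ) :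
    a k ≤ ρ ^ k * a 0 + b * ∑ i ∈ range k, σ ^ i * ρ ^ (k - 1 - i) := by
  induction k with
  | zero => simp
  | succ k ih =>
    have hsum := geom_sum₂_succ_eq σ ρ (n := k)
    simp only [Nat.add_sub_cancel] at hsum ⊢
    calc a (k + 1) ≤ ρ * a k + b * σ ^ k := h k
      _ ≤ ρ * (ρ ^ k * a 0 + b * ∑ i ∈ range k, σ ^ i * ρ ^ (k - 1 - i)) + b * σ ^ k := by
          gcongr
      _ = _ := by rw [hsum]; ring

lemma geom_sum₂_le_pow_div {ρ σ : ℝ} (hρ : 0 ≤ ρ) (hσ : 0 ≤ σ) (hρσ : ρ ≠ σ) (k : ℕ) :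
    ∑ i ∈ range k, σ ^ i * ρ ^ (k - 1 - i) ≤ max ρ σ ^ k / |σ - ρ| := by
  have hsum_nonneg : 0 ≤ ∑ i ∈ range k, σ ^ i * ρ ^ (k - 1 - i) := by positivity
  rw [le_div_iff₀ (abs_pos.2 (sub_ne_zero.2 hρσ.symm)), ← abs_of_nonneg hsum_nonneg, ← abs_mul,
    geom_sum₂_mul]
  exact abs_sub_le_of_nonneg_of_le (by positivity) (pow_le_pow_left₀ hσ (le_max_right _ _) k)
    (by positivity) (pow_le_pow_left₀ hρ (le_max_left _ _) k)

lemma exists_sq_le_mul_max_pow {a : ℕ → ℝ} {r θ b : ℝ} (hr : 0 ≤ r) (hθ : 0 ≤ θ) (hrθ : r ≠ θ)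
    (hb : 0 ≤ b) (ha : ∀ k, 0 ≤ a k) (h : ∀ k, a (k + 1) ≤ √r * a k + b * √θ ^ k) :
    ∃ M > 0, ∀ k, a k ^ 2 ≤ M * max r θ ^ k := by
  have hρσ : √r ≠ √θ := fun heq => hrθ ((Real.sqrt_inj hr hθ).1 heq)
  set C := a 0 + b / |√θ - √r|
  have hbound : ∀ k, a k ≤ C * max √r √θ ^ k := fun k => by
    calc a k ≤ √r ^ k * a 0 + b * ∑ i ∈ range k, √θ ^ i * √r ^ (k - 1 - i) :=
          le_pow_mul_add_geom_sum₂ (Real.sqrt_nonneg _) h k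
      _ ≤ max √r √θ ^ k * a 0 + b * (max √r √θ ^ k / |√θ - √r|) := by
          gcongr
          · exact ha 0
          · exact le_max_left _ _
          · exact geom_sum₂_le_pow_div (Real.sqrt_nonneg _) (Real.sqrt_nonneg _) hρσ k
      _ = C * max √r √θ ^ k := by ring
  refine ⟨C ^ 2 + 1, by positivity, fun k => ?_⟩
  calc a k ^ 2 ≤ (C * max √r √θ ^ k) ^ 2 := pow_le_pow_left₀ (ha k) (hbound k) 2
    _ = C ^ 2 * max r θ ^ k := by
        rw [mul_pow, ← pow_mul, mul_comm k, pow_mul, ← Real.sqrt_monotone.map_max,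
          Real.sq_sqrt (le_max_of_le_left hr)]
    _ ≤ (C ^ 2 + 1) * max r θ ^ k := by
        gcongr
        linarith

lemma exists_sq_le_mul_sq_mul_pow {a : ℕ → ℝ} {r b : ℝ} (hr : 0 < r)
    (ha : ∀ k, 0 ≤ a k) (h : ∀ k, a (k + 1) ≤ √r * a k + b * √r ^ k) :
    ∃ M > 0, ∀ k, 1 ≤ k → a k ^ 2 ≤ M * ((k : ℝ) ^ 2 * r ^ k) := by
  have hρ : 0 < √r := Real.sqrt_pos.2 hr
  have hbound : ∀ k, 1 ≤ k → a k ≤ (a 0 + b / √r) * (k * √r ^ k) := fun k hk => by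
    have hk' : (1 : ℝ) ≤ k := by exact_mod_cast hk
    calc a k ≤ √r ^ k * a 0 + b * ∑ i ∈ range k, √r ^ i * √r ^ (k - 1 - i) :=
          le_pow_mul_add_geom_sum₂ hρ.le h k
      _ = √r ^ k * a 0 + b / √r * k * √r ^ k := by
          rw [geom_sum₂_self, ← pow_sub_one_mul (by omega : k ≠ 0)]
          field_simp
      _ ≤ (a 0 + b / √r) * (k * √r ^ k) := by
          linear_combination
            mul_nonneg (mul_nonneg (sub_nonneg.2 hk') (ha 0)) (pow_nonneg hρ.le k)
  refine ⟨(a 0 + b / √r) ^ 2 + 1, by positivity, fun k hk => ?_⟩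
  calc a k ^ 2 ≤ ((a 0 + b / √r) * (k * √r ^ k)) ^ 2 := pow_le_pow_left₀ (ha k) (hbound k hk) 2
    _ = (a 0 + b / √r) ^ 2 * ((k : ℝ) ^ 2 * r ^ k) := by
        rw [mul_pow, mul_pow, ← pow_mul, mul_comm k, pow_mul, Real.sq_sqrt hr.le]
    _ ≤ ((a 0 + b / √r) ^ 2 + 1) * ((k : ℝ) ^ 2 * r ^ k) := by
        gcongr
        linarith

section Calculus

variable {E : Type*} [NormedAddCommGroup E] [InnerProductSpace ℝ E] [CompleteSpace E]

lemma hasDerivAt_comp_add_smul {f : E → ℝ} {x v : E} {t : ℝ}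
    (hf : DifferentiableAt ℝ f (x + t • v)) :
    HasDerivAt (fun t : ℝ => f (x + t • v)) ⟪gradient f (x + t • v), v⟫ t := by
  have hline : HasDerivAt (fun t : ℝ => x + t • v) v t := by
    simpa using ((hasDerivAt_id t).smul_const v).const_add x
  rw [inner_gradient_left]
  exact hf.hasFDerivAt.comp_hasDerivAt t hline

lemma StrongConvexOn.add_inner_gradient_add_sq_le {s : Set E} {m : ℝ} {f : E → ℝ}
    (hf : StrongConvexOn s m f) {x y : E} (hx : x ∈ s) (hy : y ∈ s)
    (hd : DifferentiableAt ℝ f x) :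
    f x + ⟪gradient f x, y - x⟫ + m / 2 * ‖y - x‖ ^ 2 ≤ f y := by
  have hslope : Tendsto (fun t : ℝ => (f (x + t • (y - x)) - f x) / t) (𝓝[>] 0)
      (𝓝 ⟪gradient f x, y - x⟫) := by
    have hderiv := hasDerivAt_comp_add_smul (t := 0) (v := y - x) (by simpa using hd)
    simp only [zero_smul, add_zero] at hderiv
    simpa [slope_fun_def, div_eq_inv_mul] using
      (hasDerivAt_iff_tendsto_slope.mp hderiv).mono_left (nhdsGT_le_nhdsNE 0)
  have hbound : Tendsto (fun t : ℝ => f y - f x - m / 2 * ((1 - t) * ‖y - x‖ ^ 2)) (𝓝[>] 0)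
      (𝓝 (f y - f x - m / 2 * ‖y - x‖ ^ 2)) := by
    have : ContinuousAt (fun t : ℝ => f y - f x - m / 2 * ((1 - t) * ‖y - x‖ ^ 2)) 0 := by
      fun_prop
    simpa using this.continuousWithinAt.tendsto
  have hle : ⟪gradient f x, y - x⟫ ≤ f y - f x - m / 2 * ‖y - x‖ ^ 2 := by
    refine le_of_tendsto_of_tendsto hslope hbound ?_
    filter_upwards [Ioo_mem_nhdsGT (zero_lt_one' ℝ)] with t ⟨ht0, ht1⟩
    have hconv := hf.2 hy hx ht0.le (sub_nonneg.2 ht1.le) (add_sub_cancel t 1)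
    rw [show t • y + (1 - t) • x = x + t • (y - x) by module, smul_eq_mul, smul_eq_mul] at hconv
    rw [div_le_iff₀ ht0]
    nlinarith
  linarith

lemma StrongConvexOn.sq_norm_sub_le_of_isLocalMin {s : Set E} {m : ℝ} {f : E → ℝ}
    (hf : StrongConvexOn s m f) {x xmin : E} (hx : x ∈ s) (hxmin : xmin ∈ s)
    (hmin : IsLocalMin f xmin) (hd : DifferentiableAt ℝ f xmin) :
    m / 2 * ‖x - xmin‖ ^ 2 ≤ f x - f xmin := by
  have hgrad : gradient f xmin = 0 := by rw [gradient, hmin.fderiv_eq_zero, map_zero]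
  have := hf.add_inner_gradient_add_sq_le hxmin hx hd
  rw [hgrad, inner_zero_left] at this
  linarith

lemma le_add_inner_gradient_add_sq {f : E → ℝ} {L : ℝ} (hf : Differentiable ℝ f)
    (hsmooth : ∀ u v, ‖gradient f u - gradient f v‖ ≤ L * ‖u - v‖) (x y : E) :
    f y ≤ f x + ⟪gradient f x, y - x⟫ + L / 2 * ‖y - x‖ ^ 2 := by
  set w := y - x
  set φ : ℝ → ℝ := fun t => f (x + t • w) - t * ⟪gradient f x, w⟫ - L / 2 * t ^ 2 * ‖w‖ ^ 2
  have hφ : ∀ t : ℝ, HasDerivAt φ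
      (⟪gradient f (x + t • w), w⟫ - ⟪gradient f x, w⟫ - L * t * ‖w‖ ^ 2) t := by
    intro t
    have hline := hasDerivAt_comp_add_smul (x := x) (v := w) (hf (x + t • w))
    have hlin := (hasDerivAt_id t).mul_const ⟪gradient f x, w⟫
    have hquad := ((hasDerivAt_pow 2 t).const_mul (L / 2)).mul_const (‖w‖ ^ 2)
    exact ((hline.sub hlin).sub hquad).congr_deriv (by norm_num only [one_mul]; ring)
  have hφ' : ∀ t ∈ interior (Icc (0 : ℝ) 1),
      ⟪gradient f (x + t • w), w⟫ - ⟪gradient f x, w⟫ - L * t * ‖w‖ ^ 2 ≤ 0 := by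
    intro t ht
    rw [interior_Icc] at ht
    rw [← inner_sub_left, sub_nonpos]
    calc ⟪gradient f (x + t • w) - gradient f x, w⟫
        ≤ ‖gradient f (x + t • w) - gradient f x‖ * ‖w‖ := real_inner_le_norm _ _
      _ ≤ L * ‖t • w‖ * ‖w‖ := by
          gcongr
          simpa using hsmooth (x + t • w) x
      _ = L * t * ‖w‖ ^ 2 := by rw [norm_smul, Real.norm_of_nonneg ht.1.le]; ring
  have := antitoneOn_of_hasDerivWithinAt_nonpos (convex_Icc 0 1)
    (fun t _ => (hφ t).continuousAt.continuousWithinAt) (fun t _ => (hφ t).hasDerivWithinAt) hφ'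
    (left_mem_Icc.2 zero_le_one) (right_mem_Icc.2 zero_le_one) zero_le_one
  simp only [φ, one_smul, zero_smul, add_zero, w, add_sub_cancel] at this
  linarith

end Calculus

section Potential

variable {E : Type*} [NormedAddCommGroup E] [InnerProductSpace ℝ E]

lemma norm_smul_add_smul_sq_le {a b : ℝ} (ha : 0 ≤ a) (hb : 0 ≤ b) (hab : a + b = 1)
    (u v : E) :
    ‖a • u + b • v‖ ^ 2 ≤ a * ‖u‖ ^ 2 + b * ‖v‖ ^ 2 := by
  have hsc : StrongConvexOn univ 2 fun u : E => ‖u‖ ^ 2 :=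
    strongConvexOn_iff_convex.2 (by simpa using convexOn_const (0 : ℝ) convex_univ)
  have := hsc.2 (mem_univ u) (mem_univ v) ha hb hab
  simp only [smul_eq_mul] at this
  nlinarith [mul_nonneg (mul_nonneg ha hb) (sq_nonneg ‖u - v‖)]

/-- `s` stands for `√κ`, and `(s + 1) • v - s • y` is the auxiliary sequence `z^k` of the
estimate-sequence analysis of Nesterov's method. -/
noncomputable def nesterovPotential (f : E → ℝ) (μ s : ℝ) (xmin y v : E) : ℝ :=
  f y - f xmin + μ / 2 * ‖(s + 1) • v - s • y - xmin‖ ^ 2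

lemma sub_le_nesterovPotential {f : E → ℝ} {μ : ℝ} (hμ : 0 ≤ μ) (s : ℝ) (xmin y v : E) :
    f y - f xmin ≤ nesterovPotential f μ s xmin y v :=
  le_add_of_nonneg_right (by positivity)

lemma norm_sq_extrapolation_le {μ L s : ℝ} (hμ : 0 < μ) (hs : 1 < s) (hL : μ * s ^ 2 = L)
    {x y y' v' d xmin : E} (hy' : y' = x - (1 / L) • d)
    (hv' : v' = y' + ((s - 1) / (s + 1)) • (y' - y)) :
    μ / 2 * ‖(s + 1) • v' - s • y' - xmin‖ ^ 2 ≤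
      (1 - 1 / s) * (μ / 2 * ‖(s + 1) • x - s • y - xmin‖ ^ 2) +
        1 / s * (μ / 2 * ‖xmin - x‖ ^ 2) - 1 / s * ⟪s • x - (s - 1) • y - xmin, d⟫ +
        1 / (2 * L) * ‖d‖ ^ 2 := by
  have hs0 : 0 < s := one_pos.trans hs
  have hL0 : 0 < L := hL ▸ by positivity
  set w := s • x - (s - 1) • y - xmin with hw
  have hz' : (s + 1) • v' - s • y' - xmin = w - (s / L) • d := by
    rw [hv', hy', hw]
    match_scalars <;> field_simp <;> ring
  have hw_conv :
      ‖w‖ ^ 2 ≤ (1 - 1 / s) * ‖(s + 1) • x - s • y - xmin‖ ^ 2 + 1 / s * ‖xmin - x‖ ^ 2 := by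
    have hw_eq : w = (1 - 1 / s) • ((s + 1) • x - s • y - xmin) + (1 / s) • (x - xmin) := by
      rw [hw]; match_scalars <;> field_simp <;> ring
    rw [hw_eq, norm_sub_rev xmin]
    exact norm_smul_add_smul_sq_le (by rw [sub_nonneg, div_le_one hs0]; exact hs.le)
      (by positivity) (by ring) _ _
  have hz'_sq :
      ‖w - (s / L) • d‖ ^ 2 = ‖w‖ ^ 2 - 2 * (s / L) * ⟪w, d⟫ + (s / L) ^ 2 * ‖d‖ ^ 2 := by
    rw [norm_sub_sq_real, real_inner_smul_right, norm_smul, Real.norm_of_nonneg (by positivity)]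
    ring
  have hgrad_coeff : μ / 2 * (2 * (s / L)) = 1 / s := by rw [← hL]; field_simp
  have hsq_coeff : μ / 2 * (s / L) ^ 2 = 1 / (2 * L) := by rw [← hL]; field_simp
  rw [hz', hz'_sq]
  linear_combination μ / 2 * hw_conv - ⟪w, d⟫ * hgrad_coeff + ‖d‖ ^ 2 * hsq_coeff

lemma nesterovPotential_step_le {f : E → ℝ} {μ L s : ℝ} (hμ : 0 < μ) (hs : 1 < s)
    (hL : μ * s ^ 2 = L) {x y y' v' g e xmin : E}
    (hy' : y' = x - (1 / L) • (g + e)) (hv' : v' = y' + ((s - 1) / (s + 1)) • (y' - y))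
    (hdesc : f y' ≤ f x + ⟪g, y' - x⟫ + L / 2 * ‖y' - x‖ ^ 2)
    (hmin : f x + ⟪g, xmin - x⟫ + μ / 2 * ‖xmin - x‖ ^ 2 ≤ f xmin)
    (hy : f x + ⟪g, y - x⟫ ≤ f y) :
    nesterovPotential f μ s xmin y' v' ≤ (1 - 1 / s) * nesterovPotential f μ s xmin y x +
      ‖e‖ * (‖y' - xmin‖ + (1 - 1 / s) * ‖y - xmin‖) := by
  have hs0 : 0 < s := one_pos.trans hs
  have hL0 : 0 < L := hL ▸ by positivity
  have hq1 : 0 ≤ 1 - 1 / s := by rw [sub_nonneg, div_le_one hs0]; exact hs.le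
  set w := s • x - (s - 1) • y - xmin with hw
  have hdesc' : f y' ≤ f x - 1 / L * ⟪g, g + e⟫ + 1 / (2 * L) * ‖g + e‖ ^ 2 := by
    rw [show y' - x = -((1 / L) • (g + e)) by rw [hy']; abel, inner_neg_right, norm_neg,
      real_inner_smul_right, norm_smul, Real.norm_of_nonneg (by positivity)] at hdesc
    refine hdesc.trans_eq ?_
    field_simp
    ring
  -- the momentum point `w` averages `x - xmin` and `x - y`, which is where `hmin` and `hy` enter
  have hwg : 1 / s * ⟪w, g⟫ = -(1 / s * ⟪g, xmin - x⟫) - (1 - 1 / s) * ⟪g, y - x⟫ := by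
    have : (1 / s) • w = -((1 / s) • (xmin - x)) - (1 - 1 / s) • (y - x) := by
      rw [hw]; match_scalars <;> grind
    rw [← real_inner_smul_left, this, inner_sub_left, inner_neg_left, real_inner_smul_left,
      real_inner_smul_left, real_inner_comm g, real_inner_comm g]
  have herr : 1 / L * ⟪e, g + e⟫ - 1 / s * ⟪w, e⟫ ≤
      ‖e‖ * (‖y' - xmin‖ + (1 - 1 / s) * ‖y - xmin‖) := by
    have : (1 / L) • (g + e) - (1 / s) • w = (xmin - y') + (1 - 1 / s) • (y - xmin) := by
      rw [hy', hw]; match_scalars <;> grind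
    calc 1 / L * ⟪e, g + e⟫ - 1 / s * ⟪w, e⟫ = ⟪e, (1 / L) • (g + e) - (1 / s) • w⟫ := by
          rw [inner_sub_right, real_inner_smul_right, real_inner_smul_right, real_inner_comm e w]
      _ ≤ ‖e‖ * ‖(xmin - y') + (1 - 1 / s) • (y - xmin)‖ := this ▸ real_inner_le_norm _ _
      _ ≤ ‖e‖ * (‖y' - xmin‖ + (1 - 1 / s) * ‖y - xmin‖) := by
          gcongr
          refine (norm_add_le _ _).trans ?_
          rw [norm_sub_rev, norm_smul, Real.norm_of_nonneg hq1]
  have hge : ‖g + e‖ ^ 2 = ⟪g, g + e⟫ + ⟪e, g + e⟫ := by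
    rw [← inner_add_left, real_inner_self_eq_norm_sq]
  have hz := norm_sq_extrapolation_le (xmin := xmin) hμ hs hL hy' hv'
  rw [← hw, inner_add_right] at hz
  unfold nesterovPotential
  linear_combination hdesc' + hz - hwg + herr + 1 / s * hmin + (1 - 1 / s) * hy + 1 / L * hge

end Potential

section Iterates

variable {E : Type*} [NormedAddCommGroup E] [InnerProductSpace ℝ E] [CompleteSpace E]

lemma nesterov_iterates_mem {V : Submodule ℝ E} {f : E → ℝ} {L β : ℝ} {y v e : ℕ → E}
    (hgrad : ∀ u ∈ V, gradient f u ∈ V) (he : ∀ k, e (k + 1) ∈ V) (hy0 : y 0 ∈ V)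
    (hv0 : v 0 ∈ V) (hy : ∀ k, y (k + 1) = v k - (1 / L) • (gradient f (v k) + e (k + 1)))
    (hv : ∀ k, v (k + 1) = y (k + 1) + β • (y (k + 1) - y k)) (k : ℕ) : y k ∈ V ∧ v k ∈ V := by
  induction k with
  | zero => exact ⟨hy0, hv0⟩
  | succ k ih =>
    have hyV : y (k + 1) ∈ V := hy k ▸
      V.sub_mem ih.2 (V.smul_mem _ (V.add_mem (hgrad _ ih.2) (he k)))
    exact ⟨hyV, hv k ▸ V.add_mem hyV (V.smul_mem _ (V.sub_mem hyV ih.1))⟩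

lemma exists_sqrt_nesterovPotential_succ_le {f : E → ℝ} {V : Submodule ℝ E} {μ L s : ℝ}
    {xmin : E} {y v e : ℕ → E} {ε : ℕ → ℝ} (hμ : 0 < μ) (hs : 1 < s) (hL : μ * s ^ 2 = L)
    (hf : Differentiable ℝ f) (hsmooth : ∀ u w, ‖gradient f u - gradient f w‖ ≤ L * ‖u - w‖)
    (hsc : StrongConvexOn V μ f) (hxminV : xmin ∈ V) (hxmin : ∀ z, f xmin ≤ f z)
    (hmem : ∀ k, y k ∈ V ∧ v k ∈ V) (he : ∀ k, ‖e (k + 1)‖ ≤ ε (k + 1))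
    (hy : ∀ k, y (k + 1) = v k - (1 / L) • (gradient f (v k) + e (k + 1)))
    (hv : ∀ k, v (k + 1) = y (k + 1) + ((s - 1) / (s + 1)) • (y (k + 1) - y k)) :
    ∃ K ≥ 0, ∀ k, √(nesterovPotential f μ s xmin (y (k + 1)) (v (k + 1))) ≤
      √(1 - 1 / s) * √(nesterovPotential f μ s xmin (y k) (v k)) + K * ε (k + 1) := by
  set P := fun k => nesterovPotential f μ s xmin (y k) (v k)
  have hs0 : 0 < s := one_pos.trans hs
  have hρ : 0 < 1 - 1 / s := by rw [sub_pos, div_lt_one hs0]; exact hs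
  have hρ1 : 1 - 1 / s ≤ 1 := by linarith [one_div_pos.2 hs0]
  have hP : ∀ k, f (y k) - f xmin ≤ P k := fun k => sub_le_nesterovPotential hμ.le _ _ _ _
  have hP0 : ∀ k, 0 ≤ P k := fun k => (sub_nonneg.2 (hxmin _)).trans (hP k)
  have hdist : ∀ k, ‖y k - xmin‖ ≤ √(2 / μ) * √(P k) := fun k => by
    have := hsc.sq_norm_sub_le_of_isLocalMin (hmem k).1 hxminV
      (IsMinOn.isLocalMin (fun z _ => hxmin z) univ_mem) (hf xmin)
    rw [← Real.sqrt_mul (by positivity),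
      Real.le_sqrt (norm_nonneg _) (mul_nonneg (by positivity) (hP0 k))]
    have := hP k
    field_simp
    linarith
  refine ⟨√(2 / μ) * (1 + 1 / √(1 - 1 / s)) / 2, by positivity, fun k => ?_⟩
  have hε : 0 ≤ ε (k + 1) := (norm_nonneg _).trans (he k)
  refine le_mul_add_of_sq_le (Real.sqrt_pos.2 hρ) (Real.sqrt_le_one.2 hρ1)
    (Real.sqrt_nonneg _) hε (Real.sqrt_nonneg _) ?_
  rw [Real.sq_sqrt (hP0 _), Real.sq_sqrt (hP0 _), Real.sq_sqrt hρ.le]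
  calc P (k + 1) ≤ (1 - 1 / s) * P k +
        ‖e (k + 1)‖ * (‖y (k + 1) - xmin‖ + (1 - 1 / s) * ‖y k - xmin‖) :=
        nesterovPotential_step_le hμ hs hL (hy k) (hv k)
          (le_add_inner_gradient_add_sq hf hsmooth _ _)
          (hsc.add_inner_gradient_add_sq_le (hmem k).2 hxminV (hf _))
          ((le_add_of_nonneg_right (by positivity)).trans
            (hsc.add_inner_gradient_add_sq_le (hmem k).2 (hmem k).1 (hf _)))
    _ ≤ (1 - 1 / s) * P k + ε (k + 1) * (√(2 / μ) * √(P (k + 1)) + √(2 / μ) * √(P k)) := by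
        have hd : ‖y (k + 1) - xmin‖ + (1 - 1 / s) * ‖y k - xmin‖ ≤
            √(2 / μ) * √(P (k + 1)) + √(2 / μ) * √(P k) :=
          add_le_add (hdist _) ((mul_le_of_le_one_left (norm_nonneg _) hρ1).trans (hdist k))
        exact add_le_add_right (mul_le_mul (he k) hd (by positivity) hε) _
    _ = (1 - 1 / s) * P k + √(2 / μ) * ε (k + 1) * (√(P (k + 1)) + √(P k)) := by ring

end Iterates

theorem stmt11_general {m : ℕ} (μ L : ℝ) (hμ : 0 < μ) (hμL : μ < L)
    (V : Submodule ℝ (EuclideanSpace ℝ (Fin m)))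
    (F : EuclideanSpace ℝ (Fin m) → ℝ)
    (hFdiff : Differentiable ℝ F)
    (hFsmooth : ∀ u v : EuclideanSpace ℝ (Fin m),
      ‖gradient F u - gradient F v‖ ≤ L * ‖u - v‖)
    (hFsc : ∀ u ∈ V, ∀ v ∈ V, ∀ θ' : ℝ, 0 ≤ θ' → θ' ≤ 1 →
      F (θ' • u + (1 - θ') • v) ≤ θ' * F u + (1 - θ') * F v
        - μ / 2 * (θ' * (1 - θ') * ‖u - v‖ ^ 2))
    (hFgradV : ∀ v ∈ V, gradient F v ∈ V)
    (ystar : EuclideanSpace ℝ (Fin m)) (hystarV : ystar ∈ V)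
    (hystar : ∀ z, F ystar ≤ F z)
    (κ β : ℝ) (hκ : κ = L / μ) (hβ : β = (Real.sqrt κ - 1) / (Real.sqrt κ + 1))
    (θ : ℝ) (hθ : θ ∈ Set.Ioo (0 : ℝ) 1)
    (ε : ℕ → ℝ)
    (hεgeo : ∀ k : ℕ, 1 ≤ k → ε k ^ 2 = ε 1 ^ 2 * θ ^ (k - 1))
    (y v : ℕ → EuclideanSpace ℝ (Fin m))
    (e : ℕ → EuclideanSpace ℝ (Fin m))
    (hy0 : y 0 = 0) (hv0 : v 0 = 0)
    (heV : ∀ k, e (k + 1) ∈ V)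
    (heε : ∀ k, ‖e (k + 1)‖ ≤ ε (k + 1))
    (hyk : ∀ k, y (k + 1) = v k - (1 / L) • (gradient F (v k) + e (k + 1)))
    (hvk : ∀ k, v (k + 1) = y (k + 1) + β • (y (k + 1) - y k)) :
    (θ ≠ 1 - 1 / Real.sqrt κ →
      ∃ M > 0, ∀ k : ℕ, 1 ≤ k →
        F (y k) - F ystar ≤ M * max (1 - 1 / Real.sqrt κ) θ ^ k) ∧
    (θ = 1 - 1 / Real.sqrt κ →
      ∃ M > 0, ∀ k : ℕ, 1 ≤ k →
        F (y k) - F ystar ≤ M * ((k : ℝ) ^ 2 * (1 - 1 / Real.sqrt κ) ^ k)) := by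
  have hκ1 : 1 < κ := hκ ▸ (one_lt_div hμ).2 hμL
  have hs : 1 < √κ := by rwa [Real.lt_sqrt zero_le_one, one_pow]
  have hL : μ * √κ ^ 2 = L := by rw [Real.sq_sqrt (by linarith), hκ]; field_simp
  have hρ : 0 < 1 - 1 / √κ := sub_pos.2 ((div_lt_one (by positivity)).2 hs)
  have hsc : StrongConvexOn (V : Set _) μ F := ⟨V.convex, fun u hu w hw a b ha hb hab => by
    obtain rfl := eq_sub_of_add_eq' hab
    simp only [smul_eq_mul]
    linarith [hFsc u hu w hw a ha (by linarith)]⟩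
  have hmem := nesterov_iterates_mem hFgradV heV (hy0 ▸ V.zero_mem) (hv0 ▸ V.zero_mem) hyk hvk
  obtain ⟨K, hK, hrec⟩ := exists_sqrt_nesterovPotential_succ_le hμ hs hL hFdiff hFsmooth hsc
    hystarV hystar hmem heε hyk (hβ ▸ hvk)
  have hε : ∀ k, 0 ≤ ε (k + 1) := fun k => (norm_nonneg _).trans (heε k)
  have hε_pow := eq_mul_sqrt_pow_of_sq_eq hθ.1.le hε hεgeo
  set a := fun k => √(nesterovPotential F μ √κ ystar (y k) (v k))
  have hrec' : ∀ k, a (k + 1) ≤ √(1 - 1 / √κ) * a k + K * ε 1 * √θ ^ k := fun k => by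
    rw [mul_assoc, ← hε_pow]; exact hrec k
  have hFP : ∀ k, F (y k) - F ystar ≤ a k ^ 2 := fun k => by
    rw [Real.sq_sqrt ((sub_nonneg.2 (hystar _)).trans (sub_le_nesterovPotential hμ.le _ _ _ _))]
    exact sub_le_nesterovPotential hμ.le _ _ _ _
  refine ⟨fun hne => ?_, fun heq => ?_⟩
  · obtain ⟨M, hM, hbound⟩ := exists_sq_le_mul_max_pow hρ.le hθ.1.le (Ne.symm hne)
      (mul_nonneg hK (hε 0)) (fun _ => Real.sqrt_nonneg _ : ∀ k, 0 ≤ a k) hrec'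
    exact ⟨M, hM, fun k _ => (hFP k).trans (hbound k)⟩
  · obtain ⟨M, hM, hbound⟩ :=
      exists_sq_le_mul_sq_mul_pow hρ (fun _ => Real.sqrt_nonneg _ : ∀ k, 0 ≤ a k) (heq ▸ hrec')
    exact ⟨M, hM, fun k hk => (hFP k).trans (hbound k hk)⟩

/-- Linear convergence of inexact accelerated gradient descent under strong convexity on
a subspace, with geometrically decaying errors `ε_k² = ε₁² θ^{k−1}`:
(i) if `θ ≠ 1 − 1/√κ` then `F(y^k) − F(y*) ≤ M max(1 − 1/√κ, θ)^k`;
(ii) if `θ = 1 − 1/√κ` then `F(y^k) − F(y*) ≤ M k² (1 − 1/√κ)^k`. -/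
theorem stmt11 {m : ℕ} (μ L : ℝ) (hμ : 0 < μ) (hμL : μ < L)
    (V : Submodule ℝ (EuclideanSpace ℝ (Fin m)))
    (F : EuclideanSpace ℝ (Fin m) → ℝ)
    (hFconv : ConvexOn ℝ Set.univ F)
    (hFdiff : Differentiable ℝ F)
    (hFsmooth : ∀ u v : EuclideanSpace ℝ (Fin m),
      ‖gradient F u - gradient F v‖ ≤ L * ‖u - v‖)
    (hFsc : ∀ u ∈ V, ∀ v ∈ V, ∀ θ' : ℝ, 0 ≤ θ' → θ' ≤ 1 →
      F (θ' • u + (1 - θ') • v) ≤ θ' * F u + (1 - θ') * F v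
        - μ / 2 * (θ' * (1 - θ') * ‖u - v‖ ^ 2))
    (hFgradV : ∀ v ∈ V, gradient F v ∈ V)
    (ystar : EuclideanSpace ℝ (Fin m)) (hystarV : ystar ∈ V)
    (hystar : ∀ z, F ystar ≤ F z)
    (κ β : ℝ) (hκ : κ = L / μ) (hβ : β = (Real.sqrt κ - 1) / (Real.sqrt κ + 1))
    (θ : ℝ) (hθ : θ ∈ Set.Ioo (0 : ℝ) 1)
    (ε : ℕ → ℝ) (hε : ∀ k, 0 ≤ ε k)
    (hεgeo : ∀ k : ℕ, 1 ≤ k → ε k ^ 2 = ε 1 ^ 2 * θ ^ (k - 1))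
    (y v : ℕ → EuclideanSpace ℝ (Fin m))
    (e : ℕ → EuclideanSpace ℝ (Fin m))
    (hy0 : y 0 = 0) (hv0 : v 0 = 0)
    (heV : ∀ k, e (k + 1) ∈ V)
    (heε : ∀ k, ‖e (k + 1)‖ ≤ ε (k + 1))
    (hyk : ∀ k, y (k + 1) = v k - (1 / L) • (gradient F (v k) + e (k + 1)))
    (hvk : ∀ k, v (k + 1) = y (k + 1) + β • (y (k + 1) - y k)) :
    (θ ≠ 1 - 1 / Real.sqrt κ →
      ∃ M > 0, ∀ k : ℕ, 1 ≤ k →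
        F (y k) - F ystar ≤ M * max (1 - 1 / Real.sqrt κ) θ ^ k) ∧
    (θ = 1 - 1 / Real.sqrt κ →
      ∃ M > 0, ∀ k : ℕ, 1 ≤ k →
        F (y k) - F ystar ≤ M * ((k : ℝ) ^ 2 * (1 - 1 / Real.sqrt κ) ^ k)) :=
  stmt11_general μ L hμ hμL V F hFdiff hFsmooth hFsc hFgradV ystar hystarV hystar κ β hκ hβ θ hθ ε
    hεgeo y v e hy0 hv0 heV heε hyk hvk
end

section
/- In the iD2A setting described in the context, let Γ_k = F(y^k) − F(y*) and σ = σmax(𝐀) (the largest singular value of 𝐀). Then for every k ≥ 1: ‖x^{k+1} − x*‖² ≤ (4σ²·λmax(C))/(μ_f² μ_H² μ_F) · ( (2√κ/(√κ + 1))·√(Γ_k) + ((√κ − 1)/(√κ + 1))·√(Γ_{k−1}) )² + 2 e_{x,k+1}. -/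
open scoped RealInnerProductSpace Kronecker
open Matrix

/-- The largest singular value of a matrix, i.e. the operator norm of the induced linear
map between Euclidean spaces. -/
noncomputable def sigmaMax {m n : Type*} [Fintype m] [Fintype n] [DecidableEq n]
    (A : Matrix m n ℝ) : ℝ :=
  ‖LinearMap.toContinuousLinearMap (Matrix.toEuclideanLin A)‖

/-- The largest eigenvalue of a (positive semidefinite symmetric) matrix, as the
operator norm of the induced linear map between Euclidean spaces. -/
noncomputable def lambdaMax {m : ℕ} (M : Matrix (Fin m) (Fin m) ℝ) : ℝ :=
  ‖LinearMap.toContinuousLinearMap (Matrix.toEuclideanLin M)‖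

/-- The smallest nonzero (i.e. positive) eigenvalue of a positive semidefinite matrix. -/
noncomputable def posMinEig {m : ℕ} (M : Matrix (Fin m) (Fin m) ℝ) : ℝ :=
  sInf {t : ℝ | 0 < t ∧ ∃ v : EuclideanSpace ℝ (Fin m), v ≠ 0 ∧
    Matrix.toEuclideanLin M v = t • v}

/-- The linear map on `ℝ^{np}` induced by `M ⊗ I_p` for an `n × n` matrix `M`. -/
noncomputable def kronIdLin (p : ℕ) {n : ℕ} (M : Matrix (Fin n) (Fin n) ℝ) :
    EuclideanSpace ℝ (Fin n × Fin p) →ₗ[ℝ] EuclideanSpace ℝ (Fin n × Fin p) :=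
  Matrix.toEuclideanLin (M ⊗ₖ (1 : Matrix (Fin p) (Fin p) ℝ))


section GenericAux
variable {E F₂ : Type*} [NormedAddCommGroup E] [InnerProductSpace ℝ E]
  [NormedAddCommGroup F₂] [InnerProductSpace ℝ F₂]

omit [InnerProductSpace ℝ E] in
lemma aux_two_sq (a b c : E) : ‖a - b‖^2 ≤ 2*‖a - c‖^2 + 2*‖c - b‖^2 := by
  have h := norm_sub_le_norm_sub_add_norm_sub a c b
  nlinarith [sq_nonneg (‖a-c‖ - ‖c-b‖), norm_nonneg (a-b), norm_nonneg (a-c), norm_nonneg (c-b)]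

lemma aux_sc_gap {μ : ℝ} (hμ : 0 < μ) (h : E → ℝ)
    (hconv : ConvexOn ℝ Set.univ (fun x => h x - μ/2*‖x‖^2))
    (xb : E) (hmin : ∀ x', h xb ≤ h x') (x : E) :
    h xb + μ/2*‖x - xb‖^2 ≤ h x := by
  have key : ∀ t : ℝ, t ∈ Set.Ioc (0:ℝ) 1 → μ/2*(1-t)*‖x - xb‖^2 ≤ h x - h xb := by
    rintro t ⟨ht0, ht1⟩
    have hcomb := hconv.2 (Set.mem_univ x) (Set.mem_univ xb) (le_of_lt ht0)
      (by linarith : (0:ℝ) ≤ 1 - t) (by ring)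
    have hid : (1-t)*‖xb‖^2 + t*‖x‖^2 - ‖t • x + (1-t) • xb‖^2 = t*(1-t)*‖x - xb‖^2 := by
      have e1 : ‖t • x + (1-t) • xb‖^2 = t^2*‖x‖^2 + 2*(t*(1-t))*⟪x, xb⟫ + (1-t)^2*‖xb‖^2 := by
        rw [← real_inner_self_eq_norm_sq, ← real_inner_self_eq_norm_sq, ← real_inner_self_eq_norm_sq]
        simp only [inner_add_add_self, real_inner_smul_left, real_inner_smul_right]
        ring_nf
        rw [real_inner_comm xb x]
        ring
      have e2 : ‖x - xb‖^2 = ‖x‖^2 - 2*⟪x, xb⟫ + ‖xb‖^2 := by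
        rw [← real_inner_self_eq_norm_sq, ← real_inner_self_eq_norm_sq, ← real_inner_self_eq_norm_sq]
        simp only [inner_sub_sub_self]
        rw [real_inner_comm xb x]; ring
      rw [e1, e2]; ring
    have hlow := hmin (t • x + (1-t) • xb)
    have hthis := hcomb
    simp only at hthis
    simp only [smul_eq_mul] at hthis
    have hkey : μ/2 * (t*(1-t)*‖x - xb‖^2) ≤ t * (h x - h xb) := by nlinarith [hlow, hid]
    calc μ/2*(1-t)*‖x - xb‖^2 = t⁻¹ * (μ/2 * (t*(1-t)*‖x - xb‖^2)) := by field_simp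
    _ ≤ t⁻¹ * (t * (h x - h xb)) := by
        exact mul_le_mul_of_nonneg_left hkey (le_of_lt (inv_pos.mpr ht0))
    _ = h x - h xb := by field_simp
  have hlim : Filter.Tendsto (fun t : ℝ => μ/2*(1-t)*‖x - xb‖^2) (nhdsWithin 0 (Set.Ioc 0 1))
      (nhds (μ/2*(1-0)*‖x - xb‖^2)) := by
    apply Filter.Tendsto.mono_left _ nhdsWithin_le_nhds
    exact (Continuous.tendsto (by continuity) 0)
  have hne : (nhdsWithin (0:ℝ) (Set.Ioc 0 1)).NeBot := by
    apply mem_closure_iff_nhdsWithin_neBot.mp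
    have : (0:ℝ) ∈ closure (Set.Ioc (0:ℝ) 1) := by
      rw [closure_Ioc (by norm_num : (0:ℝ) ≠ 1)]; constructor <;> norm_num
    exact this
  have := le_of_tendsto hlim (Filter.eventually_of_mem self_mem_nhdsWithin (fun t ht => key t ht))
  simp only [sub_zero, mul_one] at this
  linarith

lemma aux_convexOn_inner_comp (T : E →ₗ[ℝ] F₂) (z : F₂) :
    ConvexOn ℝ Set.univ (fun x => ⟪z, T x⟫) := by
  refine ⟨convex_univ, fun x _ y _ a b _ _ _ => le_of_eq ?_⟩
  simp [map_add, _root_.map_smul, inner_add_right, real_inner_smul_right, smul_eq_mul]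

lemma aux_min_lip {μ : ℝ} (hμ : 0 < μ) (h : E → ℝ)
    (hconv : ConvexOn ℝ Set.univ (fun x => h x - μ/2*‖x‖^2))
    (T : E →ₗ[ℝ] F₂) (z₁ z₂ : F₂) (u₁ u₂ : E)
    (h₁ : ∀ x', h u₁ + ⟪z₁, T u₁⟫ ≤ h x' + ⟪z₁, T x'⟫)
    (h₂ : ∀ x', h u₂ + ⟪z₂, T u₂⟫ ≤ h x' + ⟪z₂, T x'⟫) :
    μ * ‖u₁ - u₂‖^2 ≤ ⟪z₂ - z₁, T (u₁ - u₂)⟫ := by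
  have key : ∀ z : F₂, ConvexOn ℝ Set.univ (fun x => (h x + ⟪z, T x⟫) - μ/2*‖x‖^2) := by
    intro z
    have := hconv.add (aux_convexOn_inner_comp T z)
    convert this using 1
    · rfl
    funext x
    simp only [Pi.add_apply]
    ring
  have g₁ := aux_sc_gap hμ _ (key z₁) u₁ (fun x' => h₁ x') u₂
  have g₂ := aux_sc_gap hμ _ (key z₂) u₂ (fun x' => h₂ x') u₁
  have hn : ‖u₂ - u₁‖ = ‖u₁ - u₂‖ := by rw [norm_sub_rev]
  rw [hn] at g₁
  rw [map_sub, inner_sub_left, inner_sub_right, inner_sub_right]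
  linarith

variable [CompleteSpace E]

lemma aux_inner_fderiv (H : E → ℝ) (hd : Differentiable ℝ H) (x v : E) :
    fderiv ℝ H x v = ⟪gradient H x, v⟫ := by
  have : HasGradientAt H (gradient H x) x := (hd x).hasGradientAt
  rw [hasGradientAt_iff_hasFDerivAt] at this
  rw [this.fderiv]
  simp [InnerProductSpace.toDual_apply_apply]

lemma aux_descent {L : ℝ} (hL : 0 < L) (H : E → ℝ) (hd : Differentiable ℝ H)
    (hlip : ∀ u v, ‖gradient H u - gradient H v‖ ≤ L * ‖u - v‖) (a b : E) :
    H b ≤ H a + ⟪gradient H a, b - a⟫ + L/2 * ‖b - a‖^2 := by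
  have hgradcont : Continuous (gradient H) := by
    have : LipschitzWith (Real.toNNReal L) (gradient H) := by
      apply LipschitzWith.of_dist_le_mul
      intro u v
      rw [dist_eq_norm, dist_eq_norm]
      calc ‖gradient H u - gradient H v‖ ≤ L * ‖u - v‖ := hlip u v
      _ = (Real.toNNReal L) * ‖u - v‖ := by rw [Real.coe_toNNReal _ hL.le]
    exact this.continuous
  set φ : ℝ → E := fun t => a + t • (b - a) with hφ
  have hφc : Continuous φ := by continuity
  have hder : ∀ t : ℝ, HasDerivAt (fun s => H (φ s)) ⟪gradient H (φ t), b - a⟫ t := by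
    intro t
    have h1 : HasDerivAt φ (b - a) t := by
      have := ((hasDerivAt_id t).smul_const (b - a)).const_add a
      simp only [one_smul] at this
      exact this
    have h2 : HasFDerivAt H (fderiv ℝ H (φ t)) (φ t) := (hd (φ t)).hasFDerivAt
    have := h2.comp_hasDerivAt t h1
    simpa only [Function.comp_def, aux_inner_fderiv H hd] using this
  have hcont : Continuous (fun t => ⟪gradient H (φ t), b - a⟫) := by
    exact (continuous_inner.comp ((hgradcont.comp hφc).prodMk continuous_const))
  have hFTC : H (φ 1) - H (φ 0) = ∫ t in (0:ℝ)..1, ⟪gradient H (φ t), b - a⟫ := by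
    rw [intervalIntegral.integral_eq_sub_of_hasDerivAt (fun t _ => hder t)
      (hcont.intervalIntegrable 0 1)]
  have hφ0 : φ 0 = a := by simp [hφ]
  have hφ1 : φ 1 = b := by simp [hφ]
  have hbound : ∀ t ∈ Set.Icc (0:ℝ) 1,
      ⟪gradient H (φ t), b - a⟫ - ⟪gradient H a, b - a⟫ ≤ L * t * ‖b - a‖^2 := by
    rintro t ⟨ht0, ht1⟩
    have h1 : ⟪gradient H (φ t) - gradient H a, b - a⟫ ≤ ‖gradient H (φ t) - gradient H a‖ * ‖b - a‖ :=
      real_inner_le_norm _ _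
    have h2 : ‖gradient H (φ t) - gradient H a‖ ≤ L * (t * ‖b - a‖) := by
      have := hlip (φ t) a
      simpa [hφ, norm_smul, abs_of_nonneg ht0] using this
    rw [inner_sub_left] at h1
    nlinarith [norm_nonneg (b - a), mul_le_mul_of_nonneg_right h2 (norm_nonneg (b - a))]
  have hint : (∫ t in (0:ℝ)..1, (⟪gradient H (φ t), b - a⟫ - ⟪gradient H a, b - a⟫))
      ≤ ∫ t in (0:ℝ)..1, L * t * ‖b - a‖^2 := by
    apply intervalIntegral.integral_mono_on (by norm_num)
    · exact (hcont.sub continuous_const).intervalIntegrable 0 1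
    · exact (Continuous.intervalIntegrable (by continuity) 0 1)
    · exact hbound
  have hval : (∫ t in (0:ℝ)..1, L * t * ‖b - a‖^2) = L/2 * ‖b - a‖^2 := by
    have : (fun t : ℝ => L * t * ‖b - a‖^2) = fun t => (L * ‖b - a‖^2) * t := by
      funext t; ring
    rw [this, intervalIntegral.integral_const_mul, integral_id]
    ring
  have hsplit : (∫ t in (0:ℝ)..1, (⟪gradient H (φ t), b - a⟫ - ⟪gradient H a, b - a⟫))
      = (∫ t in (0:ℝ)..1, ⟪gradient H (φ t), b - a⟫) - ⟪gradient H a, b - a⟫ := by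
    rw [intervalIntegral.integral_sub (hcont.intervalIntegrable 0 1)
      intervalIntegrable_const]
    simp
  rw [hφ0, hφ1] at hFTC
  rw [hsplit, ← hFTC, hval] at hint
  linarith

lemma aux_grad_min (H : E → ℝ) (hd : Differentiable ℝ H) (z lam0 : E)
    (hmin : ∀ lam', H lam0 + ⟪z, lam0⟫ ≤ H lam' + ⟪z, lam'⟫) :
    gradient H lam0 = -z := by
  set ψ : E → ℝ := fun lam => H lam + ⟪z, lam⟫ with hψ
  have hferiv : HasFDerivAt ψ (InnerProductSpace.toDual ℝ E (gradient H lam0)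
      + (innerSL ℝ z : E →L[ℝ] ℝ)) lam0 := by
    have h1 : HasFDerivAt H (InnerProductSpace.toDual ℝ E (gradient H lam0)) lam0 := by
      have := (hd lam0).hasGradientAt
      rwa [hasGradientAt_iff_hasFDerivAt] at this
    have h2 : HasFDerivAt (fun lam : E => ⟪z, lam⟫) (innerSL ℝ z : E →L[ℝ] ℝ) lam0 :=
      (innerSL ℝ z).hasFDerivAt
    exact h1.add h2
  have hlocmin : IsLocalMin ψ lam0 := Filter.Eventually.of_forall (fun lam => hmin lam)
  have hzero := hlocmin.fderiv_eq_zero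
  rw [hferiv.fderiv] at hzero
  have hall : ∀ w : E, ⟪gradient H lam0 + z, w⟫ = 0 := by
    intro w
    have := congrFun (congrArg DFunLike.coe hzero) w
    simpa [inner_add_left, InnerProductSpace.toDual_apply_apply] using this
  have := ext_inner_right ℝ (fun w => by rw [hall w]; simp :
    ∀ w : E, ⟪gradient H lam0 + z, w⟫ = ⟪(0:E), w⟫)
  rw [← add_eq_zero_iff_eq_neg]
  exact this

lemma aux_w_zero (F : E → ℝ) (hFdiff : Differentiable ℝ F) (ys w : E)
    (hmin : ∀ z, F ys ≤ F z)
    (hsub : ∀ y', F ys + ⟪-w, y' - ys⟫ ≤ F y') : w = 0 := by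
  have key : ∀ v : E, ⟪w, v⟫ = 0 := by
    intro v
    set q : ℝ → ℝ := fun t => F (ys + t • v) - F ys - t * ⟪-w, v⟫ with hqdef
    have hq0 : q 0 = 0 := by simp [hqdef]
    have hqnonneg : ∀ t, 0 ≤ q t := by
      intro t
      have := hsub (ys + t • v)
      simp only [add_sub_cancel_left] at this
      have hin : ⟪-w, t • v⟫ = t * ⟪-w, v⟫ := real_inner_smul_right _ _ _
      simp only [hqdef]; linarith [hin ▸ this]
    have hlm : IsLocalMin q 0 := by
      apply Filter.Eventually.of_forall
      intro t; rw [hq0]; exact hqnonneg t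
    have hfz : fderiv ℝ F ys = 0 :=
      IsLocalMin.fderiv_eq_zero (Filter.Eventually.of_forall hmin)
    have hline : HasDerivAt (fun t : ℝ => ys + t • v) v 0 := by
      simpa using ((hasDerivAt_id (0:ℝ)).smul_const v).const_add ys
    have hcomp : HasDerivAt (fun t : ℝ => F (ys + t • v)) 0 0 := by
      have := (hFdiff (ys + (0:ℝ) • v)).hasFDerivAt.comp_hasDerivAt 0 hline
      simp only [zero_smul, add_zero] at this
      simp only [hfz, ContinuousLinearMap.zero_apply] at this
      exact this
    have hq : HasDerivAt q (0 - ⟪-w, v⟫) 0 := by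
      have h2 : HasDerivAt (fun t : ℝ => t * ⟪-w, v⟫) ⟪-w, v⟫ 0 := by
        simpa using (hasDerivAt_id (0:ℝ)).mul_const ⟪-w, v⟫
      exact (hcomp.sub_const (F ys)).sub h2
    have := hlm.deriv_eq_zero
    rw [hq.deriv] at this
    simp only [inner_neg_left, zero_sub, neg_neg] at this
    exact this
  have := key w
  rwa [real_inner_self_eq_norm_sq, pow_eq_zero_iff (by norm_num), norm_eq_zero] at this

lemma aux_phi_ineq {L : ℝ} (hL : 0 < L) (H : E → ℝ) (hd : Differentiable ℝ H)
    (hlip : ∀ u v, ‖gradient H u - gradient H v‖ ≤ L * ‖u - v‖)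
    (lamF : E → E)
    (hlamF : ∀ z lam', H (lamF z) + ⟪z, lamF z⟫ ≤ H lam' + ⟪z, lam'⟫)
    (z z' : E) :
    H (lamF z') + ⟪z', lamF z'⟫ ≤
      H (lamF z) + ⟪z, lamF z⟫ + ⟪lamF z, z' - z⟫ - 1/(2*L)*‖z' - z‖^2 := by
  set l := lamF z with hl
  set lamhat := l + (1/L) • (z - z') with hlh
  have hg : gradient H l = -z := aux_grad_min H hd z l (hlamF z)
  have h2 := aux_descent hL H hd hlip l lamhat
  rw [hg] at h2
  have hsub : lamhat - l = (1/L) • (z - z') := by rw [hlh]; abel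
  rw [hsub] at h2
  have h1 := hlamF z' lamhat
  set X := ⟪z, z - z'⟫ with hX
  set Y := ⟪z', z - z'⟫ with hY
  set D := ‖z - z'‖^2 with hD
  have hXY : D = X - Y := by
    rw [hD, hX, hY, ← real_inner_self_eq_norm_sq, inner_sub_left]
  have e1 : ⟪-z, (1/L) • (z - z')⟫ = -((1/L) * X) := by
    rw [real_inner_smul_right, inner_neg_left]; ring
  have e2 : (L/2) * ‖(1/L) • (z - z')‖^2 = 1/(2*L) * D := by
    rw [norm_smul, mul_pow, hD]
    rw [Real.norm_eq_abs, abs_of_pos (by positivity : (0:ℝ) < 1/L)]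
    field_simp
  rw [e1, e2] at h2
  have e3 : ⟪z', lamhat⟫ = ⟪z', l⟫ + (1/L) * Y := by
    rw [hlh, inner_add_right, real_inner_smul_right]
  have e4 : ⟪l, z' - z⟫ = ⟪z', l⟫ - ⟪z, l⟫ := by
    rw [inner_sub_right, real_inner_comm l z', real_inner_comm l z]
  have e5 : ‖z' - z‖^2 = D := by rw [hD, norm_sub_rev]
  rw [e3] at h1
  rw [e4, e5]
  have hmul : (1/L) * D = (1/L) * X - (1/L) * Y := by rw [hXY]; ring
  have hhalf : 1/(2*L) * D + 1/(2*L) * D = (1/L) * D := by field_simp; ring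
  linarith

end GenericAux


section SpecAux
variable {N : ℕ}

lemma aux_opnorm_bound {m n : Type*} [Fintype m] [Fintype n] [DecidableEq n]
    (A : Matrix m n ℝ) (x : EuclideanSpace ℝ n) :
    ‖Matrix.toEuclideanLin A x‖ ≤
      ‖LinearMap.toContinuousLinearMap (Matrix.toEuclideanLin A)‖ * ‖x‖ := by
  have := (LinearMap.toContinuousLinearMap (Matrix.toEuclideanLin A)).le_opNorm x
  simpa using this

lemma aux_toEuc_basis (C : Matrix (Fin N) (Fin N) ℝ) (hC : C.IsHermitian) (i : Fin N) :
    Matrix.toEuclideanLin C (hC.eigenvectorBasis i) = hC.eigenvalues i • hC.eigenvectorBasis i := by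
  apply (WithLp.equiv 2 _).injective
  simp only [WithLp.equiv_apply, Matrix.ofLp_toEuclideanLin_apply]
  have := hC.mulVec_eigenvectorBasis i
  simpa using this

lemma aux_comp (C R : Matrix (Fin N) (Fin N) ℝ) (hRR : R * R = C)
    (v : EuclideanSpace ℝ (Fin N)) :
    Matrix.toEuclideanLin C v = Matrix.toEuclideanLin R (Matrix.toEuclideanLin R v) := by
  apply (WithLp.equiv 2 _).injective
  simp only [WithLp.equiv_apply, Matrix.ofLp_toEuclideanLin_apply]
  rw [← hRR, ← Matrix.mulVec_mulVec]

lemma aux_quad_form (C : Matrix (Fin N) (Fin N) ℝ) (hC : C.IsHermitian)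
    (w : EuclideanSpace ℝ (Fin N)) :
    ⟪w, Matrix.toEuclideanLin C w⟫ =
      ∑ i, hC.eigenvalues i * (⟪hC.eigenvectorBasis i, w⟫ * ⟪hC.eigenvectorBasis i, w⟫) := by
  set b := hC.eigenvectorBasis
  have hsym := (Matrix.isHermitian_iff_isSymmetric.1 hC)
  have h1 := b.sum_inner_mul_inner w (Matrix.toEuclideanLin C w)
  rw [← h1]
  apply Finset.sum_congr rfl
  intro i _
  have h2 : ⟪b i, Matrix.toEuclideanLin C w⟫ = ⟪Matrix.toEuclideanLin C (b i), w⟫ :=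
    (hsym (b i) w).symm
  rw [h2, aux_toEuc_basis C hC i, real_inner_smul_left, real_inner_comm w (b i)]
  ring

lemma aux_parseval (C : Matrix (Fin N) (Fin N) ℝ) (hC : C.IsHermitian)
    (w : EuclideanSpace ℝ (Fin N)) :
    ⟪w, w⟫ = ∑ i, ⟪hC.eigenvectorBasis i, w⟫ * ⟪hC.eigenvectorBasis i, w⟫ := by
  have h1 := hC.eigenvectorBasis.sum_inner_mul_inner w w
  rw [← h1]
  apply Finset.sum_congr rfl
  intro i _
  rw [real_inner_comm w (hC.eigenvectorBasis i)]

lemma aux_posMinEig_pos (C : Matrix (Fin N) (Fin N) ℝ) (hC0 : C ≠ 0)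
    (hCpsd : C.PosSemidef) : 0 < posMinEig C := by
  have hC := hCpsd.1
  set b := hC.eigenvectorBasis with hb
  set S := {t : ℝ | 0 < t ∧ ∃ v : EuclideanSpace ℝ (Fin N), v ≠ 0 ∧
    Matrix.toEuclideanLin C v = t • v} with hS
  have hsub : S ⊆ Set.range hC.eigenvalues := by
    rintro t ⟨ht, v, hv0, hveq⟩
    have hall : ∀ i, (hC.eigenvalues i - t) * ⟪b i, v⟫ = 0 := by
      intro i
      have hsym := (Matrix.isHermitian_iff_isSymmetric.1 hC)
      have h1 : ⟪b i, Matrix.toEuclideanLin C v⟫ = hC.eigenvalues i * ⟪b i, v⟫ := by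
        rw [← hsym (b i) v, aux_toEuc_basis C hC i, real_inner_smul_left]
      have h2 : ⟪b i, Matrix.toEuclideanLin C v⟫ = t * ⟪b i, v⟫ := by
        rw [hveq, real_inner_smul_right]
      rw [h1] at h2
      nlinarith [h2]
    have hex : ∃ i, ⟪b i, v⟫ ≠ 0 := by
      by_contra hcon
      push_neg at hcon
      apply hv0
      have := aux_parseval C hC v
      simp only [← hb, hcon, mul_zero, Finset.sum_const_zero] at this
      rwa [real_inner_self_eq_norm_sq, pow_eq_zero_iff (by norm_num), norm_eq_zero] at this
    obtain ⟨i, hi⟩ := hex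
    have := hall i
    rcases mul_eq_zero.1 this with h | h
    · exact ⟨i, by linarith [sub_eq_zero.1 h]⟩
    · exact absurd h hi
  have hfin : S.Finite := (Set.finite_range hC.eigenvalues).subset hsub
  have hne : S.Nonempty := by
    have hex : ∃ i, hC.eigenvalues i ≠ 0 := by
      by_contra hcon
      push_neg at hcon
      apply hC0
      have hzero : Matrix.toEuclideanLin C = (0 : _ →ₗ[ℝ] _) := by
        apply b.toBasis.ext
        intro i
        simp only [OrthonormalBasis.coe_toBasis]
        rw [aux_toEuc_basis C hC i, hcon i, zero_smul, LinearMap.zero_apply]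
      exact Matrix.toEuclideanLin.injective
        (by rw [hzero, map_zero] : Matrix.toEuclideanLin C = Matrix.toEuclideanLin 0)
    obtain ⟨i, hi⟩ := hex
    have hpos : 0 < hC.eigenvalues i := lt_of_le_of_ne (hCpsd.eigenvalues_nonneg i) (Ne.symm hi)
    exact ⟨hC.eigenvalues i, hpos, b i, b.orthonormal.ne_zero i, aux_toEuc_basis C hC i⟩
  exact (hne.csInf_mem hfin).1

lemma aux_spec_lower (C R : Matrix (Fin N) (Fin N) ℝ) (hCpsd : C.PosSemidef)
    (hRpsd : R.PosSemidef) (hRR : R * R = C) (v : EuclideanSpace ℝ (Fin N)) :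
    posMinEig C * ⟪Matrix.toEuclideanLin R v, Matrix.toEuclideanLin R v⟫ ≤
      ⟪Matrix.toEuclideanLin R (Matrix.toEuclideanLin R v),
        Matrix.toEuclideanLin R (Matrix.toEuclideanLin R v)⟫ := by
  have hC := hCpsd.1
  have hRsym := (Matrix.isHermitian_iff_isSymmetric.1 hRpsd.1)
  set b := hC.eigenvectorBasis with hb
  set w := Matrix.toEuclideanLin R v with hw
  have key : ⟪Matrix.toEuclideanLin R w, Matrix.toEuclideanLin R w⟫
      = ⟪w, Matrix.toEuclideanLin C w⟫ := by
    rw [hRsym w (Matrix.toEuclideanLin R w), ← aux_comp C R hRR w]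
  rw [key, aux_quad_form C hC w, aux_parseval C hC w, Finset.mul_sum]
  apply Finset.sum_le_sum
  intro i _
  have hker : hC.eigenvalues i = 0 → ⟪b i, w⟫ = 0 := by
    intro h0
    have hRb : Matrix.toEuclideanLin R (b i) = 0 := by
      have h1 : ⟪Matrix.toEuclideanLin R (b i), Matrix.toEuclideanLin R (b i)⟫ = 0 := by
        rw [hRsym (b i) (Matrix.toEuclideanLin R (b i)), ← aux_comp C R hRR (b i),
          aux_toEuc_basis C hC i, h0, zero_smul, inner_zero_right]
      rwa [real_inner_self_eq_norm_sq, pow_eq_zero_iff (by norm_num), norm_eq_zero] at h1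
    rw [hw, ← hRsym (b i) v, hRb, inner_zero_left]
  rcases eq_or_lt_of_le (hCpsd.eigenvalues_nonneg i) with h0 | hpos
  · rw [hker h0.symm]; simp
  · have hle : posMinEig C ≤ hC.eigenvalues i := by
      apply csInf_le
      · exact ⟨0, fun t ht => ht.1.le⟩
      · exact ⟨hpos, b i, b.orthonormal.ne_zero i, aux_toEuc_basis C hC i⟩
    nlinarith [mul_self_nonneg ⟪b i, w⟫]

lemma aux_spec_upper (C R : Matrix (Fin N) (Fin N) ℝ)
    (hRpsd : R.PosSemidef) (hRR : R * R = C) (c : EuclideanSpace ℝ (Fin N)) :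
    ⟪Matrix.toEuclideanLin R c, Matrix.toEuclideanLin R c⟫ ≤ lambdaMax C * ⟪c, c⟫ := by
  have hRsym := (Matrix.isHermitian_iff_isSymmetric.1 hRpsd.1)
  have key : ⟪Matrix.toEuclideanLin R c, Matrix.toEuclideanLin R c⟫
      = ⟪c, Matrix.toEuclideanLin C c⟫ := by
    rw [hRsym c (Matrix.toEuclideanLin R c), ← aux_comp C R hRR c]
  rw [key]
  have h1 : ⟪c, Matrix.toEuclideanLin C c⟫ ≤ ‖c‖ * ‖Matrix.toEuclideanLin C c‖ :=
    real_inner_le_norm _ _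
  have h2 : ‖Matrix.toEuclideanLin C c‖ ≤ lambdaMax C * ‖c‖ := aux_opnorm_bound C c
  have h3 : (0:ℝ) ≤ lambdaMax C := norm_nonneg _
  rw [real_inner_self_eq_norm_sq]
  nlinarith [norm_nonneg c]

end SpecAux

section KronAux
variable {n p : ℕ}

noncomputable def ecol (u : EuclideanSpace ℝ (Fin n × Fin p)) (j : Fin p) :
    EuclideanSpace ℝ (Fin n) :=
  (WithLp.equiv 2 (Fin n → ℝ)).symm (fun i => u (i, j))

lemma aux_kron_apply (R : Matrix (Fin n) (Fin n) ℝ) (u : EuclideanSpace ℝ (Fin n × Fin p))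
    (i : Fin n) (j : Fin p) :
    (Matrix.toEuclideanLin (R ⊗ₖ (1 : Matrix (Fin p) (Fin p) ℝ)) u) (i, j)
      = ∑ i', R i i' * u (i', j) := by
  show ((R ⊗ₖ (1 : Matrix (Fin p) (Fin p) ℝ)) *ᵥ (WithLp.equiv 2 _ u)) (i, j) = _
  rw [Matrix.mulVec, dotProduct]
  rw [Fintype.sum_prod_type]
  apply Finset.sum_congr rfl
  intro i' _
  rw [Finset.sum_eq_single j]
  · simp [Matrix.kroneckerMap_apply, Matrix.one_apply]
  · intro b _ hb; simp [Matrix.kroneckerMap_apply, Matrix.one_apply, Ne.symm hb]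
  · intro h; simp at h

lemma aux_col_toEuc (R : Matrix (Fin n) (Fin n) ℝ) (w : EuclideanSpace ℝ (Fin n)) (i : Fin n) :
    (Matrix.toEuclideanLin R w) i = ∑ i', R i i' * w i' := by
  show (R *ᵥ (WithLp.equiv 2 _ w)) i = _
  rw [Matrix.mulVec, dotProduct]
  rfl

lemma aux_inner_cols (u v : EuclideanSpace ℝ (Fin n × Fin p)) :
    ⟪u, v⟫ = ∑ j : Fin p, ⟪ecol u j, ecol v j⟫ := by
  simp only [ecol, PiLp.inner_apply, RCLike.inner_apply, starRingEnd_apply, star_trivial,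
    WithLp.equiv_symm_apply, PiLp.toLp_apply]
  rw [Fintype.sum_prod_type, Finset.sum_comm]

lemma aux_col_kron (R : Matrix (Fin n) (Fin n) ℝ) (u : EuclideanSpace ℝ (Fin n × Fin p))
    (j : Fin p) :
    ecol (Matrix.toEuclideanLin (R ⊗ₖ (1 : Matrix (Fin p) (Fin p) ℝ)) u) j
      = Matrix.toEuclideanLin R (ecol u j) := by
  apply (WithLp.equiv 2 (Fin n → ℝ)).injective
  funext i
  simp only [ecol, Equiv.apply_symm_apply]
  rw [aux_kron_apply]
  rw [show (WithLp.equiv 2 (Fin n → ℝ)) (Matrix.toEuclideanLin R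
    ((WithLp.equiv 2 (Fin n → ℝ)).symm fun i => u (i, j))) i
    = (Matrix.toEuclideanLin R ((WithLp.equiv 2 (Fin n → ℝ)).symm fun i => u (i, j))) i from rfl]
  rw [aux_col_toEuc]
  apply Finset.sum_congr rfl
  intro i' _
  rw [WithLp.equiv_symm_apply, PiLp.toLp_apply]

lemma aux_full_upper (C R : Matrix (Fin n) (Fin n) ℝ)
    (hRpsd : R.PosSemidef) (hRR : R * R = C) (u : EuclideanSpace ℝ (Fin n × Fin p)) :
    ‖Matrix.toEuclideanLin (R ⊗ₖ (1 : Matrix (Fin p) (Fin p) ℝ)) u‖^2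
      ≤ lambdaMax C * ‖u‖^2 := by
  rw [← real_inner_self_eq_norm_sq, ← real_inner_self_eq_norm_sq]
  rw [aux_inner_cols, aux_inner_cols u u, Finset.mul_sum]
  apply Finset.sum_le_sum
  intro j _
  rw [aux_col_kron]
  exact aux_spec_upper C R hRpsd hRR (ecol u j)

lemma aux_full_lower (C R : Matrix (Fin n) (Fin n) ℝ) (hCpsd : C.PosSemidef)
    (hRpsd : R.PosSemidef) (hRR : R * R = C) (v : EuclideanSpace ℝ (Fin n × Fin p)) :
    posMinEig C * ‖Matrix.toEuclideanLin (R ⊗ₖ (1 : Matrix (Fin p) (Fin p) ℝ)) v‖^2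
      ≤ ‖Matrix.toEuclideanLin (R ⊗ₖ (1 : Matrix (Fin p) (Fin p) ℝ))
          (Matrix.toEuclideanLin (R ⊗ₖ (1 : Matrix (Fin p) (Fin p) ℝ)) v)‖^2 := by
  rw [← real_inner_self_eq_norm_sq, ← real_inner_self_eq_norm_sq]
  rw [aux_inner_cols, aux_inner_cols, Finset.mul_sum]
  apply Finset.sum_le_sum
  intro j _
  simp only [aux_col_kron]
  exact aux_spec_lower C R hCpsd hRpsd hRR (ecol v j)

lemma aux_kron_herm (R : Matrix (Fin n) (Fin n) ℝ) (hR : R.IsHermitian) :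
    (R ⊗ₖ (1 : Matrix (Fin p) (Fin p) ℝ)).IsHermitian := by
  have hRs : ∀ a b, R a b = R b a := by
    intro a b
    conv_lhs => rw [← hR]
    simp [Matrix.conjTranspose_apply]
  unfold Matrix.IsHermitian
  ext ⟨i, j⟩ ⟨i', j'⟩
  simp only [Matrix.conjTranspose_apply, Matrix.kroneckerMap_apply, Matrix.one_apply,
    star_trivial]
  by_cases h : j = j'
  · subst h; simp [hRs i i']
  · simp [h, Ne.symm h]

end KronAux


set_option maxHeartbeats 1000000

/-- Primal error bound for iD2A via the dual² function-value gap (Lemma 17 of the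
paper): in the iD2A setting, with `Γ_k = F(y^k) − F(y*)` and `σ = σmax(𝐀)`, for every
`k ≥ 1`:
`‖x^{k+1} − x*‖² ≤ (4σ²λmax(C))/(μ_f² μ_H² μ_F) ((2√κ/(√κ+1))√Γ_k + ((√κ−1)/(√κ+1))√Γ_{k−1})²
 + 2 e_{x,k+1}`. -/
theorem stmt17 {d n p : ℕ} (hn : 2 ≤ n) (hp : 1 ≤ p)
    (μf : ℝ) (hμf : 0 < μf)
    (f : EuclideanSpace ℝ (Fin d) → ℝ)
    (hf : ConvexOn ℝ Set.univ (fun x => f x - μf / 2 * ‖x‖ ^ 2))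
    (g : EuclideanSpace ℝ (Fin d) → ℝ) (hg : ConvexOn ℝ Set.univ g)
    (AA : Matrix (Fin n × Fin p) (Fin d) ℝ)
    (r : EuclideanSpace ℝ (Fin n × Fin p) → ℝ) (hr : ConvexOn ℝ Set.univ r)
    (H : EuclideanSpace ℝ (Fin n × Fin p) → ℝ)
    (hH : ∀ lam, H lam = (⨆ x : EuclideanSpace ℝ (Fin d),
        (-⟪lam, Matrix.toEuclideanLin AA x⟫ - f x - g x)) + r lam)
    (μH LH : ℝ) (hμH : 0 < μH) (hμHLH : μH ≤ LH)
    (hHsc : ConvexOn ℝ Set.univ (fun lam => H lam - μH / 2 * ‖lam‖ ^ 2))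
    (hHdiff : Differentiable ℝ H)
    (hHsmooth : ∀ u v, ‖gradient H u - gradient H v‖ ≤ LH * ‖u - v‖)
    (C : Matrix (Fin n) (Fin n) ℝ) (hC0 : C ≠ 0)
    (hCsymm : C.IsSymm) (hCpsd : C.PosSemidef)
    (hCker : LinearMap.ker (Matrix.mulVecLin C)
      = Submodule.span ℝ {(fun _ => 1 : Fin n → ℝ)})
    (R : Matrix (Fin n) (Fin n) ℝ) (hRpsd : R.PosSemidef) (hRR : R * R = C)
    (F : EuclideanSpace ℝ (Fin n × Fin p) → ℝ)
    (hF : ∀ y, F y = ⨆ lam : EuclideanSpace ℝ (Fin n × Fin p),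
        (-H lam - ⟪y, kronIdLin p R lam⟫))
    (hFbdd : ∀ y, BddAbove (Set.range fun lam : EuclideanSpace ℝ (Fin n × Fin p) =>
        -H lam - ⟪y, kronIdLin p R lam⟫))
    (hFconv : ConvexOn ℝ Set.univ F) (hFdiff : Differentiable ℝ F)
    (lamF : EuclideanSpace ℝ (Fin n × Fin p) → EuclideanSpace ℝ (Fin n × Fin p))
    (hlamF : ∀ z lam', H (lamF z) + ⟪z, lamF z⟫ ≤ H lam' + ⟪z, lam'⟫)
    (xF : EuclideanSpace ℝ (Fin n × Fin p) → EuclideanSpace ℝ (Fin d))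
    (hxF : ∀ lam x', f (xF lam) + g (xF lam) + ⟪lam, Matrix.toEuclideanLin AA (xF lam)⟫
        ≤ f x' + g x' + ⟪lam, Matrix.toEuclideanLin AA x'⟫)
    (μF LF : ℝ) (hμF : μF = posMinEig C / LH) (hLF : μF < LF)
    (hFsmooth : ∀ u v, ‖gradient F u - gradient F v‖ ≤ LF * ‖u - v‖)
    (κ β : ℝ) (hκ : κ = LF / μF) (hβ : β = (Real.sqrt κ - 1) / (Real.sqrt κ + 1))
    (ystar : EuclideanSpace ℝ (Fin n × Fin p))
    (hystarmem : ystar ∈ LinearMap.range (kronIdLin p R))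
    (hystar : ∀ z, F ystar ≤ F z)
    (lamstar : EuclideanSpace ℝ (Fin n × Fin p))
    (hlamstar : lamstar = lamF (kronIdLin p R ystar))
    (xstar : EuclideanSpace ℝ (Fin d)) (hxstar : xstar = xF lamstar)
    (y v : ℕ → EuclideanSpace ℝ (Fin n × Fin p))
    (x : ℕ → EuclideanSpace ℝ (Fin d))
    (lam : ℕ → EuclideanSpace ℝ (Fin n × Fin p))
    (ex el : ℕ → ℝ)
    (hy0 : y 0 = 0) (hv0 : v 0 = 0)
    (hx : ∀ k : ℕ, ‖x (k + 1) - xF (lamF (kronIdLin p R (v k)))‖ ^ 2 ≤ ex (k + 1))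
    (hlam : ∀ k : ℕ, ‖lam (k + 1) - lamF (kronIdLin p R (v k))‖ ^ 2 ≤ el (k + 1))
    (hyk : ∀ k : ℕ, y (k + 1) = v k + (1 / LF) • kronIdLin p R (lam (k + 1)))
    (hvk : ∀ k : ℕ, v (k + 1) = y (k + 1) + β • (y (k + 1) - y k))
    :
    ∀ k : ℕ, 1 ≤ k →
      ‖x (k + 1) - xstar‖ ^ 2
        ≤ 4 * sigmaMax AA ^ 2 * lambdaMax C / (μf ^ 2 * μH ^ 2 * μF) *
            ((2 * Real.sqrt κ / (Real.sqrt κ + 1)) * Real.sqrt (F (y k) - F ystar)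
              + ((Real.sqrt κ - 1) / (Real.sqrt κ + 1))
                * Real.sqrt (F (y (k - 1)) - F ystar)) ^ 2
          + 2 * ex (k + 1) := by
  
  intro k hk
  have hLH : 0 < LH := lt_of_lt_of_le hμH hμHLH
  have hpm : 0 < posMinEig C := aux_posMinEig_pos C hC0 hCpsd
  have hμFpos : 0 < μF := by rw [hμF]; exact div_pos hpm hLH
  have hκ1 : 1 < κ := by rw [hκ]; exact (one_lt_div hμFpos).2 hLF
  have hsκ : 1 ≤ Real.sqrt κ := by
    rw [show (1:ℝ) = Real.sqrt 1 from Real.sqrt_one.symm]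
    exact Real.sqrt_le_sqrt (by linarith)
  have hsκ1 : 0 < Real.sqrt κ + 1 := by linarith
  have hβ0 : 0 ≤ β := by rw [hβ]; apply div_nonneg <;> linarith
  have h1β : 2 * Real.sqrt κ / (Real.sqrt κ + 1) = 1 + β := by
    rw [hβ]; field_simp; ring
  set K := kronIdLin p R with hKdef
  have hsymK : ∀ a b : EuclideanSpace ℝ (Fin n × Fin p), ⟪K a, b⟫ = ⟪a, K b⟫ :=
    fun a b => (Matrix.isHermitian_iff_isSymmetric.1 (aux_kron_herm R hRpsd.1)) a b
  -- F representation
  have hFeq : ∀ y0, F y0 = -(H (lamF (K y0)) + ⟪K y0, lamF (K y0)⟫) := by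
    intro y0
    rw [hF y0]
    apply le_antisymm
    · apply ciSup_le
      intro lam'
      have h1 := hlamF (K y0) lam'
      have h2 : ⟪y0, K lam'⟫ = ⟪K y0, lam'⟫ := (hsymK y0 lam').symm
      rw [h2]; linarith
    · have h2 : ⟪y0, K (lamF (K y0))⟫ = ⟪K y0, lamF (K y0)⟫ := (hsymK y0 _).symm
      have h3 := le_ciSup (hFbdd y0) (lamF (K y0))
      rw [h2] at h3
      linarith
  -- strong convexity of F around ystar
  set w := K (lamF (K ystar)) with hw
  have hstep : ∀ y', F ystar + ⟪-w, y' - ystar⟫ + 1/(2*LH) * ‖K (y' - ystar)‖^2 ≤ F y' := by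
    intro y'
    have h1 := aux_phi_ineq hLH H hHdiff hHsmooth lamF hlamF (K ystar) (K y')
    have e1 : K y' - K ystar = K (y' - ystar) := (map_sub K y' ystar).symm
    rw [e1] at h1
    have e2 : ⟪lamF (K ystar), K (y' - ystar)⟫ = ⟪w, y' - ystar⟫ :=
      (hsymK (lamF (K ystar)) (y' - ystar)).symm
    rw [e2] at h1
    have hFy' := hFeq y'
    have hFys := hFeq ystar
    rw [inner_neg_left]
    linarith
  have hw0 : w = 0 := by
    apply aux_w_zero F hFdiff ystar w hystar
    intro y'
    have h1 := hstep y'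
    have hnn : 0 ≤ 1/(2*LH) * ‖K (y' - ystar)‖^2 := by positivity
    linarith
  have hFsc : ∀ y', F ystar + 1/(2*LH) * ‖K (y' - ystar)‖^2 ≤ F y' := by
    intro y'
    have h1 := hstep y'
    rw [hw0] at h1
    simpa using h1
  -- iterates stay in the range of K
  have hmem : ∀ m : ℕ, y m ∈ LinearMap.range K ∧ v m ∈ LinearMap.range K := by
    intro m
    induction m with
    | zero =>
      constructor
      · rw [hy0]; exact Submodule.zero_mem _
      · rw [hv0]; exact Submodule.zero_mem _
    | succ m ih =>
      have hy' : y (m+1) ∈ LinearMap.range K := by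
        rw [hyk m]
        exact Submodule.add_mem _ ih.2 (Submodule.smul_mem _ _ ⟨lam (m+1), rfl⟩)
      refine ⟨hy', ?_⟩
      rw [hvk m]
      exact Submodule.add_mem _ hy' (Submodule.smul_mem _ _ (Submodule.sub_mem _ hy' ih.1))
  -- gap bound
  have hgap : ∀ m : ℕ, ‖y m - ystar‖ ≤
      Real.sqrt (2/μF) * Real.sqrt (F (y m) - F ystar) := by
    intro m
    have hmem' : y m - ystar ∈ LinearMap.range K := Submodule.sub_mem _ (hmem m).1 hystarmem
    obtain ⟨s, hs⟩ := hmem'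
    have h1 := hFsc (y m)
    have h2 : posMinEig C * ‖y m - ystar‖^2 ≤ ‖K (y m - ystar)‖^2 := by
      rw [← hs]
      exact aux_full_lower C R hCpsd hRpsd hRR s
    have h3 : μF/2 * ‖y m - ystar‖^2 ≤ F (y m) - F ystar := by
      have h4 := mul_le_mul_of_nonneg_left h2
        (le_of_lt (by positivity : (0:ℝ) < 1/(2*LH)))
      have h5 : μF/2 * ‖y m - ystar‖^2
          = 1/(2*LH) * (posMinEig C * ‖y m - ystar‖^2) := by
        rw [hμF]; ring
      rw [h5]
      linarith
    have h4 : ‖y m - ystar‖^2 ≤ 2/μF * (F (y m) - F ystar) := by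
      rw [div_mul_eq_mul_div, le_div_iff₀ hμFpos]
      linarith
    calc ‖y m - ystar‖ = Real.sqrt (‖y m - ystar‖^2) := (Real.sqrt_sq (norm_nonneg _)).symm
    _ ≤ Real.sqrt (2/μF * (F (y m) - F ystar)) := Real.sqrt_le_sqrt h4
    _ = Real.sqrt (2/μF) * Real.sqrt (F (y m) - F ystar) := Real.sqrt_mul (by positivity) _
  -- v k bound
  have hk1 : k - 1 + 1 = k := by omega
  have hvkk := hvk (k-1)
  rw [hk1] at hvkk
  have hvd : v k - ystar = (1+β) • (y k - ystar) - β • (y (k-1) - ystar) := by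
    rw [hvkk]; module
  have hV : ‖v k - ystar‖ ≤ (1+β) * ‖y k - ystar‖ + β * ‖y (k-1) - ystar‖ := by
    rw [hvd]
    calc ‖(1+β) • (y k - ystar) - β • (y (k-1) - ystar)‖
        ≤ ‖(1+β) • (y k - ystar)‖ + ‖β • (y (k-1) - ystar)‖ := norm_sub_le _ _
    _ = (1+β)*‖y k - ystar‖ + β*‖y (k-1) - ystar‖ := by
        rw [norm_smul, norm_smul, Real.norm_eq_abs, Real.norm_eq_abs,
          abs_of_nonneg (by linarith : (0:ℝ) ≤ 1+β), abs_of_nonneg hβ0]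
  -- Lipschitz chain
  set lam₁ := lamF (K (v k)) with hlam₁
  set lam₂ := lamF (K ystar) with hlam₂
  set σ := sigmaMax AA with hσdef
  set Λ := lambdaMax C with hΛdef
  have hσ0 : 0 ≤ σ := norm_nonneg _
  have hΛ0 : 0 ≤ Λ := norm_nonneg _
  have hσb : ∀ xx : EuclideanSpace ℝ (Fin d), ‖Matrix.toEuclideanLin AA xx‖ ≤ σ * ‖xx‖ :=
    fun xx => aux_opnorm_bound AA xx
  set dd := ‖xF lam₁ - xF lam₂‖ with hdd
  set Lm := ‖lam₁ - lam₂‖ with hLmdef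
  set Z := ‖K (v k - ystar)‖ with hZ
  set V := ‖v k - ystar‖ with hVdef
  have hdd0 : 0 ≤ dd := norm_nonneg _
  have hLm0 : 0 ≤ Lm := norm_nonneg _
  have hZ0 : 0 ≤ Z := norm_nonneg _
  have hV0 : 0 ≤ V := norm_nonneg _
  -- a1
  have hfgconv : ConvexOn ℝ Set.univ
      (fun x : EuclideanSpace ℝ (Fin d) => (f x + g x) - μf/2*‖x‖^2) := by
    have := hf.add hg
    convert this using 1
    · rfl
    funext x; simp only [Pi.add_apply]; ring
  have hxFlip := aux_min_lip hμf (fun x => f x + g x) hfgconv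
    (Matrix.toEuclideanLin AA) lam₁ lam₂ (xF lam₁) (xF lam₂)
    (fun x' => hxF lam₁ x') (fun x' => hxF lam₂ x')
  have a1 : μf * dd ≤ σ * Lm := by
    have hCS : ⟪lam₂ - lam₁, Matrix.toEuclideanLin AA (xF lam₁ - xF lam₂)⟫
        ≤ ‖lam₂ - lam₁‖ * (σ * dd) := by
      refine le_trans (real_inner_le_norm _ _) ?_
      exact mul_le_mul_of_nonneg_left (hσb _) (norm_nonneg _)
    have hrev : ‖lam₂ - lam₁‖ = Lm := norm_sub_rev _ _
    rw [hrev] at hCS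
    rcases eq_or_lt_of_le hdd0 with h0 | hpos
    · rw [← h0, mul_zero]; positivity
    · have h5 : (μf*dd)*dd ≤ (σ*Lm)*dd := by
        have h6 : μf * dd^2 ≤ Lm * (σ * dd) := le_trans hxFlip hCS
        nlinarith
      exact le_of_mul_le_mul_right h5 hpos
  -- a2
  have hHlip := aux_min_lip hμH H hHsc LinearMap.id (K (v k)) (K ystar) lam₁ lam₂
    (fun x' => hlamF (K (v k)) x') (fun x' => hlamF (K ystar) x')
  have a2 : μH * Lm ≤ Z := by
    have hCS : ⟪K ystar - K (v k), LinearMap.id (R := ℝ) (lam₁ - lam₂)⟫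
        ≤ ‖K ystar - K (v k)‖ * Lm := by
      refine le_trans (real_inner_le_norm _ _) ?_
      simp only [LinearMap.id_apply]
      exact le_refl _
    have hZeq : ‖K ystar - K (v k)‖ = Z := by
      rw [← map_sub, hZ, ← norm_neg (K (ystar - v k)), ← map_neg, neg_sub]
    rw [hZeq] at hCS
    rcases eq_or_lt_of_le hLm0 with h0 | hpos
    · rw [← h0, mul_zero]; positivity
    · have h5 : (μH*Lm)*Lm ≤ Z*Lm := by
        have h6 : μH * Lm^2 ≤ Z * Lm := le_trans hHlip hCS
        nlinarith
      exact le_of_mul_le_mul_right h5 hpos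
  -- a3
  have a3 : Z^2 ≤ Λ * V^2 := aux_full_upper C R hRpsd hRR (v k - ystar)
  -- a4
  set s₁ := Real.sqrt (F (y k) - F ystar) with hs₁
  set s₀ := Real.sqrt (F (y (k-1)) - F ystar) with hs₀
  set m := Real.sqrt (2/μF) with hm
  set S := (1+β)*s₁ + β*s₀ with hS
  have hs₁0 : 0 ≤ s₁ := Real.sqrt_nonneg _
  have hs₀0 : 0 ≤ s₀ := Real.sqrt_nonneg _
  have hm0 : 0 ≤ m := Real.sqrt_nonneg _
  have hS0 : 0 ≤ S := by positivity
  have a4 : V ≤ m * S := by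
    calc V ≤ (1+β)*‖y k - ystar‖ + β*‖y (k-1) - ystar‖ := hV
    _ ≤ (1+β)*(m*s₁) + β*(m*s₀) := by
        exact add_le_add (mul_le_mul_of_nonneg_left (hgap k) (by linarith))
          (mul_le_mul_of_nonneg_left (hgap (k-1)) hβ0)
    _ = m*S := by rw [hS]; ring
  -- squared chain
  have hm2 : m^2 = 2/μF := Real.sq_sqrt (by positivity)
  have t1 : μf^2*dd^2 ≤ σ^2*Lm^2 := by
    have := pow_le_pow_left₀ (mul_nonneg hμf.le hdd0) a1 2
    rw [mul_pow, mul_pow] at this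
    exact this
  have t2 : μH^2*Lm^2 ≤ Z^2 := by
    have := pow_le_pow_left₀ (mul_nonneg hμH.le hLm0) a2 2
    rw [mul_pow] at this
    exact this
  have t4 : V^2 ≤ m^2*S^2 := by
    have := pow_le_pow_left₀ hV0 a4 2
    rw [mul_pow] at this
    exact this
  have hd2sq : dd^2 ≤ σ^2*Λ*(m^2*S^2)/(μf^2*μH^2) := by
    rw [le_div_iff₀ (by positivity)]
    calc dd^2*(μf^2*μH^2) = μH^2*(μf^2*dd^2) := by ring
    _ ≤ μH^2*(σ^2*Lm^2) := mul_le_mul_of_nonneg_left t1 (by positivity)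
    _ = σ^2*(μH^2*Lm^2) := by ring
    _ ≤ σ^2*Z^2 := mul_le_mul_of_nonneg_left t2 (by positivity)
    _ ≤ σ^2*(Λ*V^2) := mul_le_mul_of_nonneg_left a3 (by positivity)
    _ ≤ σ^2*(Λ*(m^2*S^2)) :=
        mul_le_mul_of_nonneg_left (mul_le_mul_of_nonneg_left t4 hΛ0) (by positivity)
    _ = σ^2*Λ*(m^2*S^2) := by ring
  -- total
  have hxst : xstar = xF lam₂ := by rw [hxstar, hlamstar]
  have h2sq := aux_two_sq (x (k+1)) xstar (xF lam₁)
  have hxk := hx k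
  have hdd2 : ‖xF lam₁ - xstar‖ = dd := by rw [hxst]
  rw [hdd2] at h2sq
  have htot : ‖x (k+1) - xstar‖^2 ≤ 2*ex (k+1) + 2*(σ^2*Λ*(m^2*S^2)/(μf^2*μH^2)) := by
    linarith
  -- final rewriting
  rw [h1β, ← hβ]
  have hfinal : 2*(σ^2*Λ*(m^2*S^2)/(μf^2*μH^2))
      = 4 * σ^2 * Λ / (μf^2 * μH^2 * μF) * S^2 := by
    rw [hm2]
    field_simp
    ring
  rw [hfinal] at htot
  calc ‖x (k+1) - xstar‖^2 ≤ 2*ex (k+1) + 4 * σ^2 * Λ / (μf^2 * μH^2 * μF) * S^2 := htot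
  _ = 4 * σ^2 * Λ / (μf^2 * μH^2 * μF) * ((1+β)*s₁ + β*s₀)^2 + 2*ex (k+1) := by
      rw [hS]; ring
end
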